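/- ALBA correspondence for axiom BD2: let A be a complete lattice and Q a complete lattice; let ◇' : Q → A be completely join-preserving with right adjoint ■' : A → Q; let ▷ : Q × A → A and ▷' : Q × Q → A each be monotone in their second coordinate, with ▷' turning arbitrary joins in its first coordinate into meets. Then the inequality α ▷' β ≤ α ▷ ◇'β holds for all α, β ∈ Q if and only if the quasi-inequality holds: for all x ∈ A, γ ∈ Q, y ∈ A, if x ≤ γ ▷' (■'y) then x ≤ γ ▷ y. -/
import Mathlib

/-! ## Statement 17: ALBA correspondence for axiom BD2 -/

/-- **ALBA correspondence for BD2**: let `W` and `R` be complete lattices;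
let `diaR : R → W` be completely join-preserving with right adjoint
`bsR : W → R`; let `box : R → W → W` and `boxR : R → R → W` each be monotone
in their second coordinate, with `boxR` turning arbitrary joins in its first
coordinate into meets.  Then `α ▷' β ≤ α ▷ ◇'β` holds for all `α, β` iff for
all `x, γ, y`, `x ≤ γ ▷' ■'y` implies `x ≤ γ ▷ y`. -/
theorem alba_correspondence_bd2 {W R : Type*} [CompleteLattice W]
    [CompleteLattice R]
    (diaR : R → W) (bsR : W → R)
    (diaR_sSup : ∀ S : Set R, diaR (sSup S) = ⨆ α ∈ S, diaR α)
    (diaR_adj : ∀ (q : R) (v : W), diaR q ≤ v ↔ q ≤ bsR v)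
    (box : R → W → W) (box_mono : ∀ α : R, Monotone (box α))
    (boxR : R → R → W) (boxR_mono : ∀ α : R, Monotone (boxR α))
    (boxR_sSup : ∀ (S : Set R) (γ : R), boxR (sSup S) γ = ⨅ α ∈ S, boxR α γ) :
    (∀ α β : R, boxR α β ≤ box α (diaR β)) ↔
      (∀ (x : W) (γ : R) (y : W), x ≤ boxR γ (bsR y) → x ≤ box γ y) := by
  constructor
  · intro h x γ y hx
    exact hx.trans ((h γ (bsR y)).trans (box_mono γ ((diaR_adj (bsR y) y).mpr le_rfl)))
  · intro h α β
    exact h _ α (diaR β) (boxR_mono α ((diaR_adj β (diaR β)).mp le_rfl))
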